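/- Let G be the cluster group with presentation on generators t₁, t₂, t₃ subject to the relations t₁² = t₂² = t₃² = e, the braid relations, and the cycle relations, and let I = {t₁, t₂}. For w = t₂t₃t₁t₂, the set wG_I ∩ G^I contains at least two distinct elements, namely t₂t₃ and t₁t₂t₃; in particular, elements of G need not have a unique minimal-type coset representative in G^I with respect to a parabolic subgroup. -/
import Mathlib


/-- The relators of the cluster group presentation associated to the quiver of
mutation-Dynkin type A₃: the generators `t₁, t₂, t₃` (indexed by `0, 1, 2 : Fin 3`) are
involutions, they satisfy the braid relations and the cycle relations. -/
def clusterRels : Set (FreeGroup (Fin 3)) :=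
  { FreeGroup.of 0 ^ 2, FreeGroup.of 1 ^ 2, FreeGroup.of 2 ^ 2,
    (FreeGroup.of 0 * FreeGroup.of 1 * FreeGroup.of 0) *
      (FreeGroup.of 1 * FreeGroup.of 0 * FreeGroup.of 1)⁻¹,
    (FreeGroup.of 0 * FreeGroup.of 2 * FreeGroup.of 0) *
      (FreeGroup.of 2 * FreeGroup.of 0 * FreeGroup.of 2)⁻¹,
    (FreeGroup.of 1 * FreeGroup.of 2 * FreeGroup.of 1) *
      (FreeGroup.of 2 * FreeGroup.of 1 * FreeGroup.of 2)⁻¹,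
    (FreeGroup.of 0 * FreeGroup.of 1 * FreeGroup.of 2 * FreeGroup.of 0) *
      (FreeGroup.of 1 * FreeGroup.of 2 * FreeGroup.of 0 * FreeGroup.of 1)⁻¹,
    (FreeGroup.of 1 * FreeGroup.of 2 * FreeGroup.of 0 * FreeGroup.of 1) *
      (FreeGroup.of 2 * FreeGroup.of 0 * FreeGroup.of 1 * FreeGroup.of 2)⁻¹ }

/-- The cluster group of mutation-Dynkin type A₃. -/
abbrev ClusterGroupA3 : Type := PresentedGroup clusterRels

/-- `t i` is the image in the cluster group of the generator `tᵢ₊₁`. -/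
def t (i : Fin 3) : ClusterGroupA3 := PresentedGroup.of i

/-- The length of an element of the cluster group: the least `r` such that `w` is a
product of `r` generators. -/
noncomputable def len (w : ClusterGroupA3) : ℕ :=
  sInf {r : ℕ | ∃ L : List (Fin 3), L.length = r ∧ (L.map t).prod = w}

/-- `w` lies in `G^I` for `I = {t₁, t₂}`. -/
def mem_GI_upper (w : ClusterGroupA3) : Prop :=
  ∀ x ∈ ({0, 1} : Set (Fin 3)), len w < len (w * t x)

/-- The left coset `wG_I` for `I = {t₁, t₂}`. -/
def leftCoset_GI (w : ClusterGroupA3) : Set ClusterGroupA3 :=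
  {u | ∃ b ∈ Subgroup.closure ({t 0, t 1} : Set ClusterGroupA3), u = w * b}

/-- concrete images in S4 -/
def gg : Fin 3 → Equiv.Perm (Fin 4)
  | 0 => Equiv.swap 2 3
  | 1 => Equiv.swap 1 2
  | 2 => Equiv.swap 0 2

lemma rels_hold : ∀ r ∈ clusterRels, FreeGroup.lift gg r = 1 := by
  intro r hr
  simp only [clusterRels, Set.mem_insert_iff, Set.mem_singleton_iff] at hr
  rcases hr with h|h|h|h|h|h|h|h <;> subst h <;>
    simp only [map_mul, map_pow, map_inv, FreeGroup.lift_apply_of] <;> decide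

def φ : ClusterGroupA3 →* Equiv.Perm (Fin 4) := PresentedGroup.toGroup rels_hold

lemma phi_t (i : Fin 3) : φ (t i) = gg i := PresentedGroup.toGroup.of rels_hold

lemma phi_prod (L : List (Fin 3)) : φ ((L.map t).prod) = ((L.map gg).prod) := by
  rw [map_list_prod, List.map_map]
  exact congrArg List.prod (List.map_congr_left fun i _ => phi_t i)

lemma notMem_lenSet (x : ClusterGroupA3) (r : ℕ)
    (h : ∀ f : Fin r → Fin 3, ((List.ofFn f).map gg).prod ≠ φ x) :
    r ∉ {r : ℕ | ∃ L : List (Fin 3), L.length = r ∧ (L.map t).prod = x} := by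
  rintro ⟨L, hlen, hprod⟩
  subst hlen
  exact h L.get (by rw [List.ofFn_get, ← phi_prod, hprod])

lemma len_ge (x : ClusterGroupA3) (k : ℕ) (L : List (Fin 3))
    (hp : (L.map t).prod = x)
    (hlow : ∀ r < k, ∀ f : Fin r → Fin 3, ((List.ofFn f).map gg).prod ≠ φ x) :
    k ≤ len x := by
  have hne : L.length ∈ {r : ℕ | ∃ L' : List (Fin 3), L'.length = r ∧ (L'.map t).prod = x} :=
    ⟨L, rfl, hp⟩
  apply le_csInf ⟨L.length, hne⟩
  intro m hm
  by_contra hlt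
  exact notMem_lenSet x m (hlow m (lt_of_not_ge hlt)) hm

lemma len_eq (x : ClusterGroupA3) (k : ℕ) (L : List (Fin 3))
    (hL : L.length = k) (hp : (L.map t).prod = x)
    (hlow : ∀ r < k, ∀ f : Fin r → Fin 3, ((List.ofFn f).map gg).prod ≠ φ x) :
    len x = k :=
  le_antisymm (Nat.sInf_le ⟨L, hL, hp⟩) (len_ge x k L hp hlow)

lemma rel_one {r : FreeGroup (Fin 3)} (hr : r ∈ clusterRels) :
    PresentedGroup.mk clusterRels r = 1 :=
  (QuotientGroup.eq_one_iff _).mpr (Subgroup.subset_normalClosure hr)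

lemma mk_of (i : Fin 3) : PresentedGroup.mk clusterRels (FreeGroup.of i) = t i := rfl

lemma tsq (i : Fin 3) : t i * t i = 1 := by
  have h : PresentedGroup.mk clusterRels (FreeGroup.of i ^ 2) = 1 := by
    fin_cases i
    · exact rel_one (by left; rfl)
    · exact rel_one (by right; left; rfl)
    · exact rel_one (by right; right; left; rfl)
  rw [pow_two, map_mul, mk_of] at h
  exact h

lemma cyc : t 0 * t 1 * t 2 * t 0 = t 1 * t 2 * t 0 * t 1 := by
  have h := rel_one (show (FreeGroup.of 0 * FreeGroup.of 1 * FreeGroup.of 2 * FreeGroup.of 0) *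
      (FreeGroup.of 1 * FreeGroup.of 2 * FreeGroup.of 0 * FreeGroup.of 1)⁻¹ ∈ clusterRels by
    right; right; right; right; right; right; left; rfl)
  rw [map_mul, map_inv] at h
  have := mul_inv_eq_one.mp h
  simpa only [map_mul, mk_of] using this

lemma tsq' (i : Fin 3) (x : ClusterGroupA3) : t i * (t i * x) = x := by
  rw [← mul_assoc, tsq, one_mul]

lemma phi_12 : φ (t 1 * t 2) = gg 1 * gg 2 := by simp [map_mul, phi_t]
lemma phi_120 : φ (t 1 * t 2 * t 0) = gg 1 * gg 2 * gg 0 := by simp [map_mul, phi_t]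
lemma phi_121 : φ (t 1 * t 2 * t 1) = gg 1 * gg 2 * gg 1 := by simp [map_mul, phi_t]
lemma phi_012 : φ (t 0 * t 1 * t 2) = gg 0 * gg 1 * gg 2 := by simp [map_mul, phi_t]
lemma phi_0120 : φ (t 0 * t 1 * t 2 * t 0) = gg 0 * gg 1 * gg 2 * gg 0 := by
  simp [map_mul, phi_t]
lemma phi_0121 : φ (t 0 * t 1 * t 2 * t 1) = gg 0 * gg 1 * gg 2 * gg 1 := by
  simp [map_mul, phi_t]

lemma len12 : len (t 1 * t 2) = 2 :=
  len_eq _ 2 [1, 2] rfl (by simp) (by rw [phi_12]; decide)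

lemma len120 : 3 ≤ len (t 1 * t 2 * t 0) :=
  len_ge _ 3 [1, 2, 0] (by simp [mul_assoc]) (by rw [phi_120]; decide)

lemma len121 : 3 ≤ len (t 1 * t 2 * t 1) :=
  len_ge _ 3 [1, 2, 1] (by simp [mul_assoc]) (by rw [phi_121]; decide)

lemma len012 : len (t 0 * t 1 * t 2) = 3 :=
  len_eq _ 3 [0, 1, 2] rfl (by simp [mul_assoc]) (by rw [phi_012]; decide)

lemma len0120 : 4 ≤ len (t 0 * t 1 * t 2 * t 0) :=
  len_ge _ 4 [0, 1, 2, 0] (by simp [mul_assoc]) (by rw [phi_0120]; decide)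

lemma len0121 : 4 ≤ len (t 0 * t 1 * t 2 * t 1) :=
  len_ge _ 4 [0, 1, 2, 1] (by simp [mul_assoc]) (by rw [phi_0121]; decide)

/-- For `I = {t₁, t₂}` and `w = t₂t₃t₁t₂`, the set `wG_I ∩ G^I` contains at least two
distinct elements, namely `t₂t₃` and `t₁t₂t₃`. -/
theorem stmt_15 :
    let w : ClusterGroupA3 := t 1 * t 2 * t 0 * t 1
    (t 1 * t 2) ∈ leftCoset_GI w ∧ mem_GI_upper (t 1 * t 2) ∧
    (t 0 * t 1 * t 2) ∈ leftCoset_GI w ∧ mem_GI_upper (t 0 * t 1 * t 2) ∧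
    (t 1 * t 2 : ClusterGroupA3) ≠ t 0 * t 1 * t 2 := by
  intro w
  refine ⟨⟨t 1 * t 0, ?_, ?_⟩, ?_, ⟨t 0, ?_, ?_⟩, ?_, ?_⟩
  · exact Subgroup.mul_mem _ (Subgroup.subset_closure (by right; rfl))
      (Subgroup.subset_closure (by left; rfl))
  · show t 1 * t 2 = t 1 * t 2 * t 0 * t 1 * (t 1 * t 0)
    simp [mul_assoc, tsq, tsq']
  · intro x hx
    rcases hx with rfl | hx
    · show len (t 1 * t 2) < len (t 1 * t 2 * t 0)
      rw [len12]; exact lt_of_lt_of_le (by norm_num) len120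
    · rw [Set.mem_singleton_iff] at hx
      subst hx
      show len (t 1 * t 2) < len (t 1 * t 2 * t 1)
      rw [len12]; exact lt_of_lt_of_le (by norm_num) len121
  · exact Subgroup.subset_closure (by left; rfl)
  · show t 0 * t 1 * t 2 = t 1 * t 2 * t 0 * t 1 * t 0
    rw [← cyc]
    simp [mul_assoc, tsq, tsq']
  · intro x hx
    rcases hx with rfl | hx
    · show len (t 0 * t 1 * t 2) < len (t 0 * t 1 * t 2 * t 0)
      rw [len012]; exact lt_of_lt_of_le (by norm_num) len0120
    · rw [Set.mem_singleton_iff] at hx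
      subst hx
      show len (t 0 * t 1 * t 2) < len (t 0 * t 1 * t 2 * t 1)
      rw [len012]; exact lt_of_lt_of_le (by norm_num) len0121
  · intro h
    have := congrArg φ h
    rw [phi_12, phi_012] at this
    exact absurd this (by decide)
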